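/- Fix d ≥ 1 and n ≤ d². Let a^{(1)}, …, a^{(n)} be d×d complex matrices whose τ-tensor is diagonal with nonnegative real diagonal entries λ_1 ≥ λ_2 ≥ … ≥ λ_n, and suppose λ_1 ≤ λ_2 + ⋯ + λ_n. Extend the family to d² members by setting a^{(k)} = 0 for n < k ≤ d². Then there exists a d²×d² complex unitary matrix U such that det( ∑_{k=1}^{d²} U_{lk} a^{(k)} ) = 0 for every l ∈ {1, …, d²}; i.e. there is a decomposition of the same density matrix in which every pure state has zero G-concurrence, so the (convex-roof) G-concurrence of the state vanishes. -/

import Mathlib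

open scoped BigOperators Matrix

/-- The τ-tensor of a family `a : Fin m → Matrix (Fin d) (Fin d) ℂ`:
`τ^a_{k₁…k_d} = (d^{d/2} / d!) ∑_{σ ∈ S_d} det (M(σ))`, where the `i`-th row of `M(σ)`
is the `i`-th row of `a (k (σ i))`. -/
noncomputable def tauTensor (d m : ℕ) (a : Fin m → Matrix (Fin d) (Fin d) ℂ)
    (k : Fin d → Fin m) : ℂ :=
  (((Real.sqrt d ^ d / d.factorial : ℝ)) : ℂ) *
    ∑ σ : Equiv.Perm (Fin d), (Matrix.of fun i j => a (k (σ i)) i j).det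

/-!
Expanding the determinant multilinearly and symmetrizing over the order of the rows shows that
`d^{d/2} det (∑ₖ xₖ a⁽ᵏ⁾) = ∑_{k₁…k_d} x_{k₁} ⋯ x_{k_d} τ_{k₁…k_d}`, so for a diagonal τ-tensor
it equals `∑ₖ λₖ xₖ^d`. Take `U = W · diag(u)`, where `W` is the Fourier matrix of
`ℤ/d × ℤ/d` (all of whose entries have the same `d`-th power `κ`) and `u_k` is a `d`-th root of
a unimodular `v_k` with `∑ₖ λₖ v_k = 0`; then row `l` gives `d^{d/2} det = κ ∑ₖ λₖ v_k = 0`.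
Such `v_k` exist by the polygon inequality `λ₁ ≤ λ₂ + ⋯ + λₙ`, `λ₁` being the largest: split
`λ₂, …, λₙ` into two groups whose sums `B, C` differ by at most `λ₁`, and close the triangle
with sides `B, C, λ₁`.
-/

open Finset Complex Matrix
open scoped Kronecker

theorem exists_norm_eq_one_add_mul_add_mul_eq_zero {a b c : ℝ} (ha : 0 ≤ a) (hb : 0 ≤ b)
    (hc₁ : |a - b| ≤ c) (hc₂ : c ≤ a + b) :
    ∃ p q : ℂ, ‖p‖ = 1 ∧ ‖q‖ = 1 ∧ (a : ℂ) + b * p + c * q = 0 := by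
  let f : ℝ → ℝ := fun θ => ‖(a : ℂ) + b * exp (θ * I)‖
  have hf : Continuous f := by fun_prop
  have hπ : f Real.pi = |a - b| := by
    have : (a : ℂ) + b * -1 = ((a - b : ℝ) : ℂ) := by push_cast; ring
    simp only [f, exp_pi_mul_I, this, norm_real, Real.norm_eq_abs]
  have h0 : f 0 = a + b := by
    simp only [f, ofReal_zero, zero_mul, exp_zero, mul_one]
    exact_mod_cast abs_of_nonneg (add_nonneg ha hb)
  obtain ⟨θ, hθ⟩ := intermediate_value_univ Real.pi 0 hf (by rw [hπ, h0]; exact ⟨hc₁, hc₂⟩)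
  set z := -((a : ℂ) + b * exp (θ * I))
  refine ⟨exp (θ * I), exp (arg z * I), norm_exp_ofReal_mul_I θ, norm_exp_ofReal_mul_I _, ?_⟩
  have hz : ‖z‖ = c := by rw [norm_neg]; exact hθ
  rw [← hz, norm_mul_exp_arg_mul_I]
  ring

theorem Finset.exists_subset_abs_sum_sub_sum_sdiff_le {ι : Type*} [DecidableEq ι] (s : Finset ι)
    {w : ι → ℝ} {M : ℝ} (hM : 0 ≤ M) (hw : ∀ i ∈ s, 0 ≤ w i ∧ w i ≤ M) :
    ∃ t ⊆ s, |∑ i ∈ t, w i - ∑ i ∈ s \ t, w i| ≤ M := by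
  induction s using Finset.induction_on with
  | empty => exact ⟨∅, subset_refl _, by simpa using hM⟩
  | insert a s ha ih =>
    obtain ⟨t, hts, ht⟩ := ih fun i hi => hw i (mem_insert_of_mem hi)
    have hat : a ∉ t := fun h => ha (hts h)
    obtain ⟨hwa₀, hwaM⟩ := hw a (mem_insert_self a s)
    rw [abs_le] at ht
    -- greedily put `a` on the lighter side
    by_cases hD : ∑ i ∈ t, w i ≤ ∑ i ∈ s \ t, w i
    · refine ⟨insert a t, insert_subset_insert a hts, ?_⟩
      rw [insert_sdiff_insert, sdiff_insert_of_notMem ha, sum_insert hat, abs_le]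
      constructor <;> linarith
    · refine ⟨t, hts.trans (subset_insert a s), ?_⟩
      rw [insert_sdiff_of_notMem _ hat, sum_insert fun h => ha (mem_sdiff.1 h).1, abs_le]
      constructor <;> linarith

theorem exists_norm_eq_one_sum_mul_eq_zero {ι : Type*} [Fintype ι] [DecidableEq ι]
    (μ : ι → ℝ) (i₀ : ι) (h0 : ∀ i, 0 ≤ μ i) (hmax : ∀ i, μ i ≤ μ i₀)
    (hle : μ i₀ ≤ ∑ i ∈ univ.erase i₀, μ i) :
    ∃ v : ι → ℂ, (∀ i, ‖v i‖ = 1) ∧ ∑ i, (μ i : ℂ) * v i = 0 := by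
  set s := univ.erase i₀
  obtain ⟨t, hts, ht⟩ :=
    s.exists_subset_abs_sum_sub_sum_sdiff_le (h0 i₀) fun i _ => ⟨h0 i, hmax i⟩
  have hsum : ∑ i ∈ t, μ i + ∑ i ∈ s \ t, μ i = ∑ i ∈ s, μ i := by
    rw [add_comm, sum_sdiff hts]
  obtain ⟨p, q, hp, hq, hpq⟩ := exists_norm_eq_one_add_mul_add_mul_eq_zero
    (sum_nonneg fun i _ => h0 i) (sum_nonneg fun i _ => h0 i) ht (hsum ▸ hle)
  let v : ι → ℂ := fun i => if i = i₀ then q else if i ∈ t then 1 else p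
  have hv_sdiff : ∀ i ∈ s \ t, (μ i : ℂ) * v i = μ i * p := fun i hi => by
    dsimp only [v]
    rw [if_neg (ne_of_mem_erase (mem_sdiff.1 hi).1), if_neg (mem_sdiff.1 hi).2]
  have hv_t : ∀ i ∈ t, (μ i : ℂ) * v i = μ i := fun i hi => by
    dsimp only [v]
    rw [if_neg (ne_of_mem_erase (hts hi)), if_pos hi, mul_one]
  have hv_i₀ : v i₀ = q := if_pos rfl
  refine ⟨v, fun i => ?_, ?_⟩
  · dsimp only [v]
    split_ifs <;> simp [hp, hq]
  · rw [← add_sum_erase _ _ (mem_univ i₀), ← sum_sdiff hts, sum_congr rfl hv_sdiff,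
      sum_congr rfl hv_t, hv_i₀, ← sum_mul]
    push_cast at hpq
    linear_combination hpq

theorem Complex.exists_pow_eq_of_norm_eq_one {v : ℂ} (hv : ‖v‖ = 1) {d : ℕ} (hd : d ≠ 0) :
    ∃ u : ℂ, ‖u‖ = 1 ∧ u ^ d = v := by
  obtain ⟨u, hu⟩ := IsAlgClosed.exists_pow_nat_eq v (Nat.pos_of_ne_zero hd)
  refine ⟨u, (pow_eq_one_iff_of_nonneg (norm_nonneg u) hd).1 ?_, hu⟩
  rw [← norm_pow, hu, hv]

theorem Complex.mem_unitary_of_norm_eq_one {u : ℂ} (hu : ‖u‖ = 1) : u ∈ unitary ℂ := by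
  rw [Unitary.mem_iff_star_mul_self, star_def, conj_mul', hu]
  norm_num

theorem Matrix.det_sum_smul {R n ι : Type*} [CommRing R] [Fintype n] [DecidableEq n] [Fintype ι]
    (x : ι → R) (A : ι → Matrix n n R) :
    (∑ c, x c • A c).det = ∑ r : n → ι, (∏ i, x (r i)) * (of fun i j => A (r i) i j).det := by
  have hrows : ∑ c, x c • A c = of fun i => ∑ c, x c • A c i := by
    ext i j
    simp [sum_apply]
  calc (∑ c, x c • A c).det
      = (detRowAlternating : (n → R) [⋀^n]→ₗ[R] R).toMultilinearMap fun i => ∑ c, x c • A c i := by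
        rw [hrows]; rfl
    _ = ∑ r : n → ι, detRowAlternating.toMultilinearMap fun i => x (r i) • A (r i) i :=
        MultilinearMap.map_sum _ _
    _ = _ := sum_congr rfl fun r _ => MultilinearMap.map_smul_univ _ _ _

section Symmetrization

variable {R n ι : Type*} [CommSemiring R] [Fintype n] [DecidableEq n] [Fintype ι]

theorem sum_prod_mul_comp_perm (x : ι → R) (D : (n → ι) → R) (σ : Equiv.Perm n) :
    ∑ r : n → ι, (∏ i, x (r i)) * D (r ∘ σ) = ∑ r, (∏ i, x (r i)) * D r :=
  calc ∑ r : n → ι, (∏ i, x (r i)) * D (r ∘ σ)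
      = ∑ r : n → ι, (∏ i, x ((r ∘ σ) i)) * D (r ∘ σ) :=
        sum_congr rfl fun r _ => by rw [← Equiv.prod_comp σ fun i => x (r i)]; rfl
    _ = _ := Equiv.sum_comp (σ.symm.arrowCongr (Equiv.refl ι)) fun r => (∏ i, x (r i)) * D r

theorem sum_prod_mul_sum_perm_comp (x : ι → R) (D : (n → ι) → R) :
    ∑ r : n → ι, (∏ i, x (r i)) * ∑ σ : Equiv.Perm n, D (r ∘ σ) =
      (Fintype.card n).factorial * ∑ r, (∏ i, x (r i)) * D r :=
  calc ∑ r : n → ι, (∏ i, x (r i)) * ∑ σ : Equiv.Perm n, D (r ∘ σ)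
      = ∑ σ : Equiv.Perm n, ∑ r : n → ι, (∏ i, x (r i)) * D (r ∘ σ) := by
        simp_rw [mul_sum]; exact sum_comm
    _ = ∑ σ : Equiv.Perm n, ∑ r : n → ι, (∏ i, x (r i)) * D r :=
        sum_congr rfl fun σ _ => sum_prod_mul_comp_perm x D σ
    _ = _ := by rw [sum_const, card_univ, Fintype.card_perm, nsmul_eq_mul]

theorem sum_prod_mul_eq_sum_pow_mul_of_nonconst_eq_zero [Nonempty n] (x : ι → R)
    (f : (n → ι) → R) (hf : ∀ r : n → ι, (∃ i j, r i ≠ r j) → f r = 0) :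
    ∑ r : n → ι, (∏ i, x (r i)) * f r = ∑ c, x c ^ Fintype.card n * f (fun _ => c) := by
  let const : ι ↪ (n → ι) := ⟨fun c _ => c, Function.const_injective⟩
  symm
  calc ∑ c, x c ^ Fintype.card n * f (fun _ => c)
      = ∑ r ∈ univ.map const, (∏ i, x (r i)) * f r := by
        rw [sum_map]
        exact sum_congr rfl fun c _ => by rw [← card_univ, ← prod_const]; rfl
    _ = _ := by
      refine sum_subset (subset_univ _) fun r _ hr => mul_eq_zero_of_right _ (hf r ?_)
      by_contra! h
      exact hr (mem_map.2 ⟨r (Classical.arbitrary n), mem_univ _, funext fun i => h _ _⟩)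

end Symmetrization

theorem sqrt_pow_mul_det_sum_smul_eq_sum_tauTensor (d m : ℕ)
    (a : Fin m → Matrix (Fin d) (Fin d) ℂ) (x : Fin m → ℂ) :
    ((Real.sqrt d ^ d : ℝ) : ℂ) * (∑ k, x k • a k).det =
      ∑ k : Fin d → Fin m, (∏ i, x (k i)) * tauTensor d m a k := by
  have hfact : (d.factorial : ℂ) ≠ 0 := Nat.cast_ne_zero.2 d.factorial_ne_zero
  let D : (Fin d → Fin m) → ℂ := fun k => (of fun i j => a (k i) i j).det
  calc ((Real.sqrt d ^ d : ℝ) : ℂ) * (∑ k, x k • a k).det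
      = ((Real.sqrt d ^ d / d.factorial : ℝ) : ℂ) * (d.factorial * ∑ k, (∏ i, x (k i)) * D k) := by
        rw [det_sum_smul]
        push_cast
        rw [← mul_assoc, div_mul_cancel₀ _ hfact]
    _ = ((Real.sqrt d ^ d / d.factorial : ℝ) : ℂ) *
          ∑ k : Fin d → Fin m, (∏ i, x (k i)) * ∑ σ : Equiv.Perm (Fin d), D (k ∘ σ) := by
        rw [sum_prod_mul_sum_perm_comp, Fintype.card_fin]
    _ = _ := by
        rw [mul_sum]
        exact sum_congr rfl fun k _ => mul_left_comm _ _ _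

theorem sqrt_pow_mul_det_sum_smul_eq_sum_pow_mul_tauTensor {d m : ℕ} (hd : 1 ≤ d)
    {a : Fin m → Matrix (Fin d) (Fin d) ℂ}
    (hoff : ∀ k : Fin d → Fin m, (∃ i j, k i ≠ k j) → tauTensor d m a k = 0) (x : Fin m → ℂ) :
    ((Real.sqrt d ^ d : ℝ) : ℂ) * (∑ k, x k • a k).det =
      ∑ c, x c ^ d * tauTensor d m a (fun _ => c) := by
  have : Nonempty (Fin d) := ⟨⟨0, hd⟩⟩
  rw [sqrt_pow_mul_det_sum_smul_eq_sum_tauTensor,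
    sum_prod_mul_eq_sum_pow_mul_of_nonconst_eq_zero x _ hoff, Fintype.card_fin]

theorem Matrix.reindex_mem_unitaryGroup {m n α : Type*} [Fintype m] [DecidableEq m]
    [Fintype n] [DecidableEq n] [CommRing α] [StarRing α] (e : m ≃ n) {A : Matrix m m α}
    (hA : A ∈ unitaryGroup m α) : reindex e e A ∈ unitaryGroup n α := by
  rw [mem_unitaryGroup_iff] at hA ⊢
  rw [star_eq_conjTranspose, conjTranspose_reindex, ← star_eq_conjTranspose, reindex_apply,
    reindex_apply, submatrix_mul_equiv, hA, submatrix_one_equiv]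

theorem Matrix.diagonal_mem_unitaryGroup {n α : Type*} [Fintype n] [DecidableEq n] [CommRing α]
    [StarRing α] {u : n → α} (hu : ∀ i, u i ∈ unitary α) : diagonal u ∈ unitaryGroup n α := by
  rw [mem_unitaryGroup_iff, star_eq_conjTranspose, diagonal_conjTranspose, diagonal_mul_diagonal]
  convert diagonal_one with i
  exact (hu i).2

noncomputable def dftMatrix (N : ℕ) [NeZero N] : Matrix (ZMod N) (ZMod N) ℂ :=
  of fun j k => (Real.sqrt N : ℂ)⁻¹ * ZMod.stdAddChar (j * k)

theorem dftMatrix_mem_unitaryGroup (N : ℕ) [NeZero N] :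
    dftMatrix N ∈ unitaryGroup (ZMod N) ℂ := by
  have hN : (Real.sqrt N : ℂ)⁻¹ * (Real.sqrt N : ℂ)⁻¹ * N = 1 := by
    have hsq : (Real.sqrt N : ℂ) * Real.sqrt N = N := by
      exact_mod_cast Real.mul_self_sqrt (Nat.cast_nonneg N)
    have h0 : (Real.sqrt N : ℂ) ≠ 0 := by simp [NeZero.ne N]
    rw [← hsq, ← mul_inv, inv_mul_cancel₀ (mul_ne_zero h0 h0)]
  have hψ : ∀ j j' k : ZMod N, ZMod.stdAddChar (j * k) * star (ZMod.stdAddChar (j' * k)) =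
      ZMod.stdAddChar (k * (j - j')) := fun j j' k => by
    rw [star_def, ← AddChar.map_neg_eq_conj, ← AddChar.map_add_eq_mul]
    ring_nf
  rw [mem_unitaryGroup_iff]
  ext j j'
  simp only [mul_apply, star_apply, dftMatrix, of_apply, star_mul', mul_mul_mul_comm, hψ,
    ← mul_sum, AddChar.sum_mulShift _ (ZMod.isPrimitive_stdAddChar N), sub_eq_zero, one_apply,
    ZMod.card]
  split_ifs <;> simp [hN]

theorem dftMatrix_apply_pow (N : ℕ) [NeZero N] (j k : ZMod N) :
    dftMatrix N j k ^ N = (Real.sqrt N : ℂ)⁻¹ ^ N := by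
  rw [dftMatrix, of_apply, mul_pow, ← AddChar.map_nsmul_eq_pow, nsmul_eq_mul, ZMod.natCast_self,
    zero_mul, AddChar.map_zero_eq_one, mul_one]

theorem exists_mem_unitaryGroup_pow_apply_eq (d : ℕ) [NeZero d] :
    ∃ W ∈ unitaryGroup (Fin (d ^ 2)) ℂ, ∃ κ : ℂ, ∀ l c, W l c ^ d = κ := by
  let e : ZMod d × ZMod d ≃ Fin (d ^ 2) := Fintype.equivFinOfCardEq (by simp [sq])
  refine ⟨reindex e e (dftMatrix d ⊗ₖ dftMatrix d), reindex_mem_unitaryGroup e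
      (kronecker_mem_unitary (dftMatrix_mem_unitaryGroup d) (dftMatrix_mem_unitaryGroup d)),
    (Real.sqrt d : ℂ)⁻¹ ^ d * (Real.sqrt d : ℂ)⁻¹ ^ d, fun l c => ?_⟩
  simp only [reindex_apply, submatrix_apply, kroneckerMap_apply, mul_pow, dftMatrix_apply_pow]

theorem Fin.sum_univ_dite_lt {M : Type*} [AddCommMonoid M] {m n : ℕ} (h : n ≤ m)
    (f : (k : Fin m) → (k : ℕ) < n → M) :
    ∑ k : Fin m, (if hk : (k : ℕ) < n then f k hk else 0) = ∑ k : Fin n, f (k.castLE h) k.isLt := by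
  symm
  calc ∑ k : Fin n, f (k.castLE h) k.isLt
      = ∑ k ∈ univ.map (castLEEmb h), (if hk : (k : ℕ) < n then f k hk else 0) := by
        rw [sum_map]
        exact sum_congr rfl fun k _ => (dif_pos k.isLt).symm
    _ = _ := by
      refine sum_subset (subset_univ _) fun k _ hk => dif_neg fun hlt => hk ?_
      exact mem_map.2 ⟨⟨k, hlt⟩, mem_univ _, rfl⟩

/-- **Corollary 6 (vanishing G-concurrence).** Suppose the τ-tensor of `a⁽¹⁾, …, a⁽ⁿ⁾`
(with `n ≤ d²`) is diagonal with nonnegative entries `λ₁ ≥ … ≥ λ_n` and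
`λ₁ ≤ λ₂ + ⋯ + λ_n`. Extending the family by zero matrices to `d²` members, there is a
`d² × d²` unitary `U` such that every matrix `∑_k U_{lk} a⁽ᵏ⁾` has zero determinant; i.e.
the density matrix admits a decomposition into pure states of zero G-concurrence, so its
convex-roof G-concurrence vanishes. -/
theorem gConcurrence_vanishes
    (d n : ℕ) (hd : 1 ≤ d) (hn : 0 < n) (hnd : n ≤ d ^ 2)
    (a : Fin n → Matrix (Fin d) (Fin d) ℂ) (lam : Fin n → ℝ)
    (hlam : ∀ k, 0 ≤ lam k) (hsorted : Antitone lam)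
    (hdiag : ∀ c, tauTensor d n a (fun _ => c) = (lam c : ℂ))
    (hoff : ∀ k : Fin d → Fin n, (∃ i j, k i ≠ k j) → tauTensor d n a k = 0)
    (hle : lam ⟨0, hn⟩ ≤ ∑ k ∈ Finset.univ.erase ⟨0, hn⟩, lam k)
    (a' : Fin (d ^ 2) → Matrix (Fin d) (Fin d) ℂ)
    (ha' : ∀ k : Fin (d ^ 2),
      a' k = if h : (k : ℕ) < n then a ⟨k, h⟩ else 0) :
    ∃ U : Matrix (Fin (d ^ 2)) (Fin (d ^ 2)) ℂ,
      U ∈ Matrix.unitaryGroup (Fin (d ^ 2)) ℂ ∧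
      ∀ l, (∑ k, U l k • a' k).det = 0 := by
  have : NeZero d := ⟨by omega⟩
  have hdet (x : Fin (d ^ 2) → ℂ) : ((Real.sqrt d ^ d : ℝ) : ℂ) * (∑ k, x k • a' k).det =
      ∑ k : Fin n, x (k.castLE hnd) ^ d * lam k := by
    simp only [ha', smul_dite, smul_zero, Fin.sum_univ_dite_lt hnd]
    simpa only [hdiag, Fin.val_castLE, Fin.eta] using
      sqrt_pow_mul_det_sum_smul_eq_sum_pow_mul_tauTensor hd hoff fun k => x (k.castLE hnd)
  obtain ⟨v, hv, hv0⟩ := exists_norm_eq_one_sum_mul_eq_zero lam ⟨0, hn⟩ hlam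
    (fun k => hsorted (Nat.zero_le k)) hle
  choose u hu using fun k => exists_pow_eq_of_norm_eq_one (hv k) (NeZero.ne d)
  let u' : Fin (d ^ 2) → ℂ := fun c => if h : (c : ℕ) < n then u ⟨c, h⟩ else 1
  have hu'_castLE (k : Fin n) : u' (k.castLE hnd) = u k := dif_pos k.isLt
  have hu' (c : Fin (d ^ 2)) : u' c ∈ unitary ℂ := by
    refine mem_unitary_of_norm_eq_one ?_
    dsimp only [u']
    split_ifs <;> simp [hu]
  obtain ⟨W, hW, κ, hκ⟩ := exists_mem_unitaryGroup_pow_apply_eq d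
  refine ⟨W * diagonal u', mul_mem hW (diagonal_mem_unitaryGroup hu'), fun l => ?_⟩
  have hsqrt : ((Real.sqrt d ^ d : ℝ) : ℂ) ≠ 0 := by
    have : Real.sqrt d ≠ 0 := Real.sqrt_ne_zero'.2 (by exact_mod_cast hd)
    exact_mod_cast pow_ne_zero d this
  refine (mul_eq_zero.1 ?_).resolve_left hsqrt
  simp_rw [hdet, mul_diagonal, mul_pow, hκ, hu'_castLE, (hu _).2, mul_assoc, mul_comm (v _)]
  rw [← mul_sum, hv0, mul_zero]
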